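/- Let m, n ∈ ℕ with m ≥ 5 odd, and let I := {v ∈ (ZMod m)^n : v_1 + ⋯ + v_n ∈ {1, 3, …, m−2} (mod m)} (a maximum independent set of Z_m^n). Then Σ_{v ∈ V(Z_m^n) \ I} 2^(−|N_{Z_m^n}({v}, I)|) = m^(n−1) · (2 · 2^(−n) + ((m−3)/2) · 2^(−2n)); equivalently, every vertex of class 0 or m−1 has exactly n neighbours in I and every other vertex outside I has exactly 2n neighbours in I. -/

import Mathlib

/-- The discrete torus `Z_m^n`: the graph on `(ZMod m)^n` where two vertices are adjacent
iff they differ by `±1 (mod m)` in exactly one coordinate. -/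
def torus (m n : ℕ) : SimpleGraph (Fin n → ZMod m) :=
  SimpleGraph.fromRel fun u v =>
    ∃ j : Fin n, (u j = v j + 1 ∨ u j = v j - 1) ∧ ∀ i : Fin n, i ≠ j → u i = v i

/-- A set of vertices is independent if its vertices are pairwise non-adjacent. -/
def IsIndep {V : Type*} (G : SimpleGraph V) (s : Set V) : Prop :=
  s.Pairwise fun u v => ¬ G.Adj u v

/-- `N_G(X) := (⋃ x ∈ X, N_G(x)) \ X`. -/
def nbhd {V : Type*} (G : SimpleGraph V) (X : Set V) : Set V :=
  (⋃ x ∈ X, G.neighborSet x) \ X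

/-- `N_G(X, Y) := N_G(X) ∩ Y`. -/
def nbhdIn {V : Type*} (G : SimpleGraph V) (X Y : Set V) : Set V :=
  nbhd G X ∩ Y

/-- `E_m^n(p)`: the vertices of `Z_m^n` whose coordinate sum is `p` modulo `m`. -/
def Eclass (m n : ℕ) (p : ZMod m) : Set (Fin n → ZMod m) :=
  {v | ∑ i, v i = p}

/-- A maximum independent set: an independent set of the largest possible cardinality. -/
def MaxIndep {V : Type*} (G : SimpleGraph V) (s : Set V) : Prop :=
  IsIndep G s ∧ ∀ t : Set V, IsIndep G t → t.ncard ≤ s.ncard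

/-! The neighbours of `v` are the `2n` distinct vertices `v ± eⱼ` (distinct because `1 ≠ -1` in
`ZMod m`), of classes `c ± 1` where `c` is the class of `v`. So `v` has `n` neighbours in `I` for
each of `c + 1`, `c - 1` that is an odd class `1, 3, …, m - 2`. For an even class `c` both are
odd, except `c + 1 = 0` when `c = m - 1` and `c - 1 = m - 1` when `c = 0`. Every class contains
`m ^ (n - 1)` vertices, and besides `0` and `m - 1` there are `(m - 3) / 2` even classes. -/

open Finset Function

variable {m n : ℕ}

lemma nbhd_singleton {V : Type*} (G : SimpleGraph V) (v : V) : nbhd G {v} = G.neighborSet v := by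
  ext u
  simp only [nbhd, Set.mem_singleton_iff, Set.iUnion_iUnion_eq_left, Set.mem_sdiff,
    and_iff_left_iff_imp]
  exact fun h => (G.ne_of_adj h).symm

def torusStep (v : Fin n → ZMod m) (p : Fin n × Bool) : Fin n → ZMod m :=
  v + Pi.single p.1 (if p.2 then 1 else -1)

lemma eq_add_single_iff {ι G : Type*} [DecidableEq ι] [AddZeroClass G] {u v : ι → G} {j : ι}
    {e : G} : u = v + Pi.single j e ↔ u j = v j + e ∧ ∀ i ≠ j, u i = v i := by
  have : v + Pi.single j e = update v j (v j + e) := by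
    ext i; rcases eq_or_ne i j with rfl | h <;> simp [*]
  rw [this, eq_update_iff]

lemma torus_adj_iff [Fact (1 < m)] {u v : Fin n → ZMod m} :
    (torus m n).Adj v u ↔ ∃ p, u = torusStep v p := by
  simp only [torus, SimpleGraph.fromRel_adj, torusStep, Prod.exists, eq_add_single_iff,
    Bool.exists_bool, Bool.false_eq_true, if_false, if_true]
  constructor
  · rintro ⟨-, ⟨j, hj, hi⟩ | ⟨j, hj, hi⟩⟩
    · refine ⟨j, ?_⟩
      rcases hj with hj | hj
      · exact .inl ⟨by rw [hj]; ring, fun i h => (hi i h).symm⟩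
      · exact .inr ⟨by rw [hj]; ring, fun i h => (hi i h).symm⟩
    · refine ⟨j, ?_⟩
      rcases hj with hj | hj
      · exact .inr ⟨hj, hi⟩
      · exact .inl ⟨by rw [hj]; ring, hi⟩
  · rintro ⟨j, ⟨hj, hi⟩ | ⟨hj, hi⟩⟩
    · refine ⟨fun h => ?_, .inr ⟨j, .inr (by rw [hj]; ring), hi⟩⟩
      have := congrFun h j
      simp_all
    · refine ⟨fun h => ?_, .inr ⟨j, .inl hj, hi⟩⟩
      have := congrFun h j
      simp_all

lemma sum_torusStep (v : Fin n → ZMod m) (p : Fin n × Bool) :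
    ∑ i, torusStep v p i = ∑ i, v i + if p.2 then 1 else -1 := by
  simp [torusStep, Finset.sum_add_distrib]

lemma torusStep_injective (hm : 2 < m) (v : Fin n → ZMod m) : Injective (torusStep v) := by
  have : Fact (2 < m) := ⟨hm⟩
  have : Fact (1 < m) := ⟨by omega⟩
  rintro ⟨j, b⟩ ⟨k, c⟩ h
  have hj := congrFun (add_left_cancel h) j
  obtain rfl : j = k := by
    by_contra hjk
    cases b <;> simp [hjk] at hj
  cases b <;> cases c <;> simp_all [ZMod.neg_one_ne_one, ZMod.neg_one_ne_one.symm]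

lemma ncard_nbhdIn_preimage_sum (hm : 2 < m) (S : Finset (ZMod m)) (v : Fin n → ZMod m) :
    (nbhdIn (torus m n) {v} {u | ∑ i, u i ∈ S}).ncard =
      n * #{b : Bool | ∑ i, v i + (if b then 1 else -1) ∈ S} := by
  have : Fact (1 < m) := ⟨by omega⟩
  have : nbhdIn (torus m n) {v} {u | ∑ i, u i ∈ S} = torusStep v ''
      (univ ×ˢ ({b : Bool | ∑ i, v i + (if b then 1 else -1) ∈ S} : Finset Bool) :
        Set (Fin n × Bool)) := by
    ext u
    simp only [nbhdIn, nbhd_singleton, Set.mem_inter_iff, SimpleGraph.mem_neighborSet,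
      torus_adj_iff]
    constructor
    · rintro ⟨⟨p, rfl⟩, hp⟩
      exact ⟨p, by simpa [sum_torusStep] using hp, rfl⟩
    · rintro ⟨p, hp, rfl⟩
      exact ⟨⟨p, rfl⟩, by simpa [sum_torusStep] using hp⟩
  rw [this, Set.ncard_image_of_injective _ (torusStep_injective hm v), ← coe_product,
    Set.ncard_coe_finset, card_product, card_univ, Fintype.card_fin]

def oddClasses (m : ℕ) : Finset (ZMod m) :=
  (range (m / 2)).image fun j : ℕ => 1 + 2 * (j : ZMod m)

lemma natCast_injOn_lt : Set.InjOn (Nat.cast : ℕ → ZMod m) (Set.Iio m) := fun a ha b hb h => by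
  simpa [ZMod.val_natCast_of_lt ha, ZMod.val_natCast_of_lt hb] using congrArg ZMod.val h

lemma natCast_mem_oddClasses_iff {a : ℕ} (ha : a < m) :
    (a : ZMod m) ∈ oddClasses m ↔ Odd a := by
  simp only [oddClasses, mem_image, mem_range]
  constructor
  · rintro ⟨j, hj, h⟩
    have : 1 + 2 * j = a :=
      natCast_injOn_lt (show 1 + 2 * j < m by omega) ha (by push_cast; exact h)
    exact ⟨j, by omega⟩
  · rintro ⟨j, rfl⟩
    exact ⟨j, by omega, by push_cast; ring⟩

lemma card_oddClasses : #(oddClasses m) = m / 2 := by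
  rw [oddClasses, card_image_of_injOn, card_range]
  intro i hi j hj h
  simp only [coe_range, Set.mem_Iio] at hi hj
  have : 1 + 2 * i = 1 + 2 * j := natCast_injOn_lt (show 1 + 2 * i < m by omega)
    (show 1 + 2 * j < m by omega) (by push_cast; exact h)
  omega

section oddClasses

variable [NeZero m]

lemma zero_notMem_oddClasses : (0 : ZMod m) ∉ oddClasses m := by
  rw [← Nat.cast_zero, natCast_mem_oddClasses_iff (Nat.pos_of_neZero m)]
  exact Nat.not_odd_zero

lemma neg_one_notMem_oddClasses (hmo : Odd m) : (-1 : ZMod m) ∉ oddClasses m := by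
  have hm := Nat.pos_of_neZero m
  have : ((m - 1 : ℕ) : ZMod m) = -1 := by simp [Nat.cast_sub hm]
  rw [← this, natCast_mem_oddClasses_iff (by omega), Nat.not_odd_iff_even]
  exact Nat.Odd.sub_odd hmo odd_one

lemma add_one_mem_oddClasses_iff {s : ZMod m} (hs : s ∉ oddClasses m) :
    s + 1 ∈ oddClasses m ↔ s ≠ -1 := by
  obtain ⟨a, ha, rfl⟩ : ∃ a < m, (a : ZMod m) = s := ⟨s.val, s.val_lt, s.natCast_zmod_val⟩
  rw [natCast_mem_oddClasses_iff ha, Nat.not_odd_iff_even] at hs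
  rw [ne_eq, eq_neg_iff_add_eq_zero, ← Nat.cast_add_one]
  rcases (show a + 1 ≤ m from ha).lt_or_eq with h | h
  · rw [natCast_mem_oddClasses_iff h, ← Nat.cast_zero]
    simp only [hs.add_one, true_iff]
    exact fun h0 => by simpa using natCast_injOn_lt h (Nat.pos_of_neZero m) h0
  · simp [h, zero_notMem_oddClasses]

lemma sub_one_mem_oddClasses_iff (hmo : Odd m) {s : ZMod m} (hs : s ∉ oddClasses m) :
    s - 1 ∈ oddClasses m ↔ s ≠ 0 := by
  obtain ⟨a, ha, rfl⟩ : ∃ a < m, (a : ZMod m) = s := ⟨s.val, s.val_lt, s.natCast_zmod_val⟩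
  rw [natCast_mem_oddClasses_iff ha, Nat.not_odd_iff_even] at hs
  rcases Nat.eq_zero_or_pos a with rfl | h
  · simp [neg_one_notMem_oddClasses hmo]
  · rw [← Nat.cast_pred h, natCast_mem_oddClasses_iff (by omega), ← Nat.cast_zero]
    simp only [Nat.Even.sub_odd h hs odd_one, true_iff]
    exact fun h0 => h.ne' (natCast_injOn_lt ha (Nat.pos_of_neZero m) h0)

end oddClasses

section fibres

variable [NeZero m]

lemma card_filter_sum_eq (s : ZMod m) : #{v : Fin (n + 1) → ZMod m | ∑ i, v i = s} = m ^ n := by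
  have : #{v : Fin (n + 1) → ZMod m | ∑ i, v i = s} = #(univ : Finset (Fin n → ZMod m)) := by
    refine card_nbij' Fin.tail (fun w => Fin.cons (s - ∑ i, w i) w) ?_ ?_ ?_ ?_
    · simp
    · simp [Fin.sum_univ_succ]
    · intro v hv
      simp only [coe_filter, mem_univ, true_and, Set.mem_ofPred_eq] at hv
      subst hv
      simp only [Fin.sum_univ_succ, Fin.tail, add_sub_cancel_right, Fin.cons_self_tail]
    · intro w _
      simp
  simpa [ZMod.card] using this

lemma finsum_mem_preimage_sum {M : Type*} [AddCommMonoid M] (T : Finset (ZMod m))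
    (g : ZMod m → M) :
    ∑ᶠ v ∈ {v : Fin (n + 1) → ZMod m | ∑ i, v i ∈ T}, g (∑ i, v i) =
      m ^ n • ∑ s ∈ T, g s := by
  classical
  rw [finsum_mem_eq_toFinset_sum, Set.toFinset_ofPred, ← sum_fiberwise_eq_sum_filter', smul_sum]
  simp only [sum_const, card_filter_sum_eq]

end fibres

lemma ncard_nbhdIn_oddClasses (hm : 2 < m) (hmo : Odd m) {v : Fin n → ZMod m}
    (hv : ∑ i, v i ∉ oddClasses m) :
    (nbhdIn (torus m n) {v} {u | ∑ i, u i ∈ oddClasses m}).ncard =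
      if ∑ i, v i = 0 ∨ ∑ i, v i = -1 then n else 2 * n := by
  have : Fact (1 < m) := ⟨by omega⟩
  rw [ncard_nbhdIn_preimage_sum hm, card_filter, Fintype.sum_bool]
  simp only [if_true, Bool.false_eq_true, if_false, add_one_mem_oddClasses_iff hv,
    ← sub_eq_add_neg, sub_one_mem_oddClasses_iff hmo hv]
  have : (-1 : ZMod m) ≠ 0 := neg_ne_zero.2 one_ne_zero
  split_ifs <;> simp_all
  omega

lemma sum_compl_oddClasses_ite [Fact (1 < m)] (hmo : Odd m) {M : Type*} [AddCommMonoid M]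
    (a b : M) :
    ∑ s ∈ (oddClasses m)ᶜ, (if s = 0 ∨ s = -1 then a else b) =
      2 • a + (m / 2 - 1) • b := by
  have h0 : (-1 : ZMod m) ≠ 0 := neg_ne_zero.2 one_ne_zero
  have hpair : {s ∈ (oddClasses m)ᶜ | s = 0 ∨ s = -1} = {0, -1} := by
    ext s
    simp only [mem_filter, mem_compl, mem_insert, mem_singleton, and_iff_right_iff_imp]
    rintro (rfl | rfl)
    exacts [zero_notMem_oddClasses, neg_one_notMem_oddClasses hmo]
  have hcard := card_filter_add_card_filter_not (s := (oddClasses m)ᶜ) (fun s => s = 0 ∨ s = -1)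
  rw [hpair, card_pair h0.symm, card_compl, ZMod.card, card_oddClasses] at hcard
  rw [sum_ite, sum_const, sum_const, hpair, card_pair h0.symm]
  congr 2
  obtain ⟨t, rfl⟩ := hmo
  omega

lemma finsum_compl_inv_two_pow_ncard_nbhdIn (hm : 2 < m) (hmo : Odd m) :
    ∑ᶠ v ∈ {v : Fin (n + 1) → ZMod m | ∑ i, v i ∈ oddClasses m}ᶜ,
        ((2 : ℝ) ^ (nbhdIn (torus m (n + 1)) {v} {u | ∑ i, u i ∈ oddClasses m}).ncard)⁻¹ =
      (m : ℝ) ^ n * (2 * ((2 : ℝ) ^ (n + 1))⁻¹ +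
        ((m : ℝ) - 3) / 2 * ((2 : ℝ) ^ (2 * (n + 1)))⁻¹) := by
  have : Fact (1 < m) := ⟨by omega⟩
  have hweight : ∀ v ∈ {v : Fin (n + 1) → ZMod m | ∑ i, v i ∈ oddClasses m}ᶜ,
      ((2 : ℝ) ^ (nbhdIn (torus m (n + 1)) {v} {u | ∑ i, u i ∈ oddClasses m}).ncard)⁻¹ =
        if ∑ i, v i = 0 ∨ ∑ i, v i = -1 then ((2 : ℝ) ^ (n + 1))⁻¹
        else ((2 : ℝ) ^ (2 * (n + 1)))⁻¹ := fun v hv => by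
    rw [ncard_nbhdIn_oddClasses hm hmo hv, apply_ite (fun e => ((2 : ℝ) ^ e)⁻¹)]
  have hcompl : {v : Fin (n + 1) → ZMod m | ∑ i, v i ∈ oddClasses m}ᶜ =
      {v | ∑ i, v i ∈ (oddClasses m)ᶜ} := by
    ext; simp
  have hfibres := finsum_mem_preimage_sum (n := n) (oddClasses m)ᶜ fun s =>
    if s = 0 ∨ s = -1 then ((2 : ℝ) ^ (n + 1))⁻¹ else ((2 : ℝ) ^ (2 * (n + 1)))⁻¹
  beta_reduce at hfibres
  have hhalf : ((m / 2 - 1 : ℕ) : ℝ) = ((m : ℝ) - 3) / 2 := by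
    obtain ⟨t, rfl⟩ := hmo
    rw [show (2 * t + 1) / 2 - 1 = t - 1 by omega, Nat.cast_sub (by omega)]
    push_cast; ring
  rw [finsum_mem_congr rfl hweight, hcompl, hfibres, sum_compl_oddClasses_ite hmo,
    nsmul_eq_mul, nsmul_eq_mul, nsmul_eq_mul, hhalf]
  push_cast
  ring

/-- For `m ≥ 5` odd and `I := {v : class of v ∈ {1, 3, …, m−2}}` (a maximum independent
set of `Z_m^n`): `Σ_{v ∉ I} 2^(−|N({v}, I)|) = m^(n−1)·(2·2^(−n) + ((m−3)/2)·2^(−2n))`;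
equivalently, every vertex of class `0` or `m−1` has exactly `n` neighbours in `I`, and
every other vertex outside `I` has exactly `2n` neighbours in `I`. -/
theorem stmt_15 (m n : ℕ) (hm : 5 ≤ m) (hmo : Odd m) (hn : 1 ≤ n)
    (I : Set (Fin n → ZMod m))
    (hI : I = {v | ∃ j : ℕ, j < m / 2 ∧ ∑ i, v i = 1 + 2 * (j : ZMod m)}) :
    (∑ᶠ v ∈ Iᶜ, ((2 : ℝ) ^ (nbhdIn (torus m n) {v} I).ncard)⁻¹ =
        (m : ℝ) ^ (n - 1) *
          (2 * ((2 : ℝ) ^ n)⁻¹ + ((m : ℝ) - 3) / 2 * ((2 : ℝ) ^ (2 * n))⁻¹)) ∧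
    (∀ v : Fin n → ZMod m, (∑ i, v i = 0 ∨ ∑ i, v i = -1) →
        (nbhdIn (torus m n) {v} I).ncard = n) ∧
    (∀ v : Fin n → ZMod m, v ∉ I → ∑ i, v i ≠ 0 → ∑ i, v i ≠ -1 →
        (nbhdIn (torus m n) {v} I).ncard = 2 * n) := by
  have : NeZero m := ⟨by omega⟩
  obtain rfl : I = {v | ∑ i, v i ∈ oddClasses m} := by simp [hI, oddClasses, eq_comm]
  have hm' : 2 < m := by omega
  refine ⟨?_, fun v hv => ?_, fun v hv h0 h1 => ?_⟩
  · obtain ⟨k, rfl⟩ : ∃ k, n = k + 1 := ⟨n - 1, by omega⟩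
    rw [Nat.add_sub_cancel]
    exact finsum_compl_inv_two_pow_ncard_nbhdIn hm' hmo
  · have hvI : ∑ i, v i ∉ oddClasses m := by
      rcases hv with h | h <;> rw [h]
      exacts [zero_notMem_oddClasses, neg_one_notMem_oddClasses hmo]
    rw [ncard_nbhdIn_oddClasses hm' hmo hvI, if_pos hv]
  · rw [ncard_nbhdIn_oddClasses hm' hmo hv, if_neg (by tauto)]
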